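/- Let G = (V,E) be a finite graph and e ∈ E a pendant edge of G, i.e., an edge at least one of whose incident vertices has degree 1. Then C(G,x,y,z) = (x + y)·C(G/ₑ,x,y,z) + (xyz − xy)·C(G†ₑ,x,y,z), where G/ₑ is G with e contracted and G†ₑ is G with e and both its incident vertices removed. -/

import Mathlib

open MvPolynomial Finset
open scoped Classical

noncomputable section

/-- A finite multigraph: a finite vertex set `verts` in an ambient type `α`, a finite
edge set `edges` in an index type `β` (so parallel edges are allowed), and an endpoint
map `ends` sending each edge to an unordered pair of vertices (loops are allowed). -/
structure Multigraph (α β : Type) where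
  verts : Finset α
  edges : Finset β
  ends : β → Sym2 α
  ends_mem : ∀ f ∈ edges, ∀ v ∈ ends f, v ∈ verts

namespace Multigraph

variable {α β : Type}

/-- The simple graph underlying the spanning subgraph with edge set `A`. -/
def sg (G : Multigraph α β) (A : Finset β) : SimpleGraph α :=
  SimpleGraph.fromEdgeSet {s | ∃ f ∈ A, G.ends f = s}

/-- A connected component of the spanning subgraph `⟨A⟩` is covered if it contains an
endpoint of an edge of `A`. -/
def covered (G : Multigraph α β) (A : Finset β) (c : (G.sg A).ConnectedComponent) : Prop :=
  ∃ f ∈ A, ∃ v, v ∈ G.ends f ∧ (G.sg A).connectedComponentMk v = c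

/-- `c(⟨A⟩)`: the number of covered components of the spanning subgraph `⟨A⟩`. -/
def nCov (G : Multigraph α β) (A : Finset β) : ℕ :=
  Nat.card {c : (G.sg A).ConnectedComponent // G.covered A c}

/-- `k(⟨A⟩)`: the number of connected components of the spanning subgraph `⟨A⟩`,
i.e. the covered components together with the isolated vertices. -/
def nComp (G : Multigraph α β) (A : Finset β) : ℕ :=
  G.nCov A + (G.verts.filter (fun v => ∀ f ∈ A, v ∉ G.ends f)).card

/-- The covered components polynomial
`C(G,x,y,z) = ∑_{A ⊆ E} x^{k(⟨A⟩)} y^{|A|} z^{c(⟨A⟩)}`, with `x = X 0`, `y = X 1`,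
`z = X 2`. -/
def ccp (G : Multigraph α β) : MvPolynomial (Fin 3) ℤ :=
  ∑ A ∈ G.edges.powerset, X 0 ^ G.nComp A * X 1 ^ A.card * X 2 ^ G.nCov A

/-- `G₋ₑ`: deletion of the edge `e`. -/
def delete (G : Multigraph α β) (e : β) : Multigraph α β where
  verts := G.verts
  edges := G.edges.erase e
  ends := G.ends
  ends_mem := fun f hf => G.ends_mem f (Finset.mem_of_mem_erase hf)

/-- `G/ₑ`: contraction of the edge `e` with endpoints `v₁`, `v₂`:
the edge is removed and `v₂` is merged into `v₁`. -/
def contract (G : Multigraph α β) (e : β) (v₁ v₂ : α) : Multigraph α β where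
  verts := insert v₁ (G.verts.erase v₂)
  edges := G.edges.erase e
  ends := fun f => Sym2.map (fun w => if w = v₂ then v₁ else w) (G.ends f)
  ends_mem := by
    intro f hf v hv
    obtain ⟨w, hw, rfl⟩ := Sym2.mem_map.mp hv
    by_cases h : w = v₂
    · simp [h]
    · simp only [if_neg h]
      exact Finset.mem_insert_of_mem
        (Finset.mem_erase.mpr ⟨h, G.ends_mem f (Finset.mem_of_mem_erase hf) w hw⟩)

/-- `G†ₑ`: extraction of an edge with endpoints `v₁`, `v₂`: the vertices `v₁`, `v₂`
and all edges incident to them (in particular the edge itself) are removed. -/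
def extract (G : Multigraph α β) (v₁ v₂ : α) : Multigraph α β where
  verts := (G.verts.erase v₁).erase v₂
  edges := G.edges.filter (fun f => v₁ ∉ G.ends f ∧ v₂ ∉ G.ends f)
  ends := G.ends
  ends_mem := by
    intro f hf v hv
    rw [Finset.mem_filter] at hf
    refine Finset.mem_erase.mpr ⟨?_, Finset.mem_erase.mpr ⟨?_, G.ends_mem f hf.1 v hv⟩⟩
    · rintro rfl; exact hf.2.2 hv
    · rintro rfl; exact hf.2.1 hv

/-- `G₋ᵥ`: deletion of the vertex `v` together with all incident edges. -/
def deleteVert (G : Multigraph α β) (v : α) : Multigraph α β where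
  verts := G.verts.erase v
  edges := G.edges.filter (fun f => v ∉ G.ends f)
  ends := G.ends
  ends_mem := by
    intro f hf w hw
    rw [Finset.mem_filter] at hf
    exact Finset.mem_erase.mpr ⟨by rintro rfl; exact hf.2 hw, G.ends_mem f hf.1 w hw⟩

/-- Disjoint union of two multigraphs. -/
def disjUnion {α' β' : Type} (G : Multigraph α β) (H : Multigraph α' β') :
    Multigraph (α ⊕ α') (β ⊕ β') where
  verts := G.verts.disjSum H.verts
  edges := G.edges.disjSum H.edges
  ends := Sum.elim (fun f => (G.ends f).map Sum.inl) (fun f => (H.ends f).map Sum.inr)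
  ends_mem := by
    intro f hf v hv
    rcases f with f | f
    · simp only [Sum.elim_inl] at hv
      obtain ⟨w, hw, rfl⟩ := Sym2.mem_map.mp hv
      exact Finset.inl_mem_disjSum.mpr
        (G.ends_mem f (Finset.inl_mem_disjSum.mp hf) w hw)
    · simp only [Sum.elim_inr] at hv
      obtain ⟨w, hw, rfl⟩ := Sym2.mem_map.mp hv
      exact Finset.inr_mem_disjSum.mpr
        (H.ends_mem f (Finset.inr_mem_disjSum.mp hf) w hw)

/-- `K₁`: the one-vertex graph. -/
def K1 : Multigraph Unit Empty where
  verts := Finset.univ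
  edges := ∅
  ends := fun f => f.elim
  ends_mem := fun f hf => absurd hf (Finset.notMem_empty f)

end Multigraph


/-! Split the edge sets `A ⊆ E` according to whether `e ∈ A`.  For `e ∉ A` the vertex `v₁` is
isolated in `⟨A⟩`, so `⟨A⟩` is `⟨A⟩` of `G/ₑ` plus the isolated vertex `v₁`, while adding `e`
hangs `v₁` onto the component of `v₂`: one component fewer, and one covered component more
exactly when `v₂` was isolated too.  In that last case `A` is an edge set of `G†ₑ`, whose
spanning subgraph `⟨A⟩` is that of `G/ₑ` without the isolated vertex `v₂`. -/

namespace Multigraph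

variable {α β : Type}

def support (G : Multigraph α β) (A : Finset β) : Finset α :=
  A.biUnion fun f => (G.ends f).toFinset

def weight (G : Multigraph α β) (A : Finset β) : MvPolynomial (Fin 3) ℤ :=
  X 0 ^ G.nComp A * X 1 ^ A.card * X 2 ^ G.nCov A

section SpanningSubgraph

variable {G H : Multigraph α β} {A : Finset β}

lemma mem_support {v : α} : v ∈ G.support A ↔ ∃ f ∈ A, v ∈ G.ends f := by
  simp [support, Sym2.mem_toFinset]

lemma mem_support_of_adj {a b : α} (h : (G.sg A).Adj a b) : a ∈ G.support A := by
  obtain ⟨⟨f, hf, hs⟩, -⟩ := (SimpleGraph.fromEdgeSet_adj _).mp h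
  exact mem_support.mpr ⟨f, hf, hs ▸ Sym2.mem_mk_left a b⟩

lemma eq_of_connectedComponentMk_eq {u w : α} (hu : u ∉ G.support A)
    (h : (G.sg A).connectedComponentMk w = (G.sg A).connectedComponentMk u) : w = u := by
  obtain ⟨p⟩ := (SimpleGraph.ConnectedComponent.eq.mp h).symm
  cases p with
  | nil => rfl
  | cons hadj _ => exact absurd (mem_support_of_adj hadj) hu

lemma sg_mono {B : Finset β} (h : A ⊆ B) : G.sg A ≤ G.sg B :=
  SimpleGraph.fromEdgeSet_mono fun _ ⟨f, hf, hs⟩ => ⟨f, h hf, hs⟩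

lemma nCov_eq_card_image :
    G.nCov A = ((G.support A).image (G.sg A).connectedComponentMk).card := by
  rw [nCov, ← Nat.card_eq_finsetCard]
  refine Nat.card_congr (Equiv.subtypeEquivRight fun c => ?_)
  simp only [covered, Finset.mem_image, mem_support]
  aesop

lemma nComp_eq_nCov_add_card :
    G.nComp A = G.nCov A + (G.verts.filter (· ∉ G.support A)).card := by
  simp [nComp, mem_support]

section Congr

variable (h : ∀ f ∈ A, H.ends f = G.ends f)
include h

lemma sg_congr : H.sg A = G.sg A := by
  unfold sg
  congr 1
  ext s
  exact exists_congr fun f => and_congr_right fun hf => by rw [h f hf]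

lemma support_congr : H.support A = G.support A :=
  Finset.biUnion_congr rfl fun f hf => by rw [h f hf]

lemma nCov_congr : H.nCov A = G.nCov A := by
  rw [nCov_eq_card_image, nCov_eq_card_image, sg_congr h, support_congr h]

lemma nComp_add_one_of_verts_eq_erase {v : α} (hverts : H.verts = G.verts.erase v)
    (hv : v ∈ G.verts) (hvA : v ∉ G.support A) : H.nComp A + 1 = G.nComp A := by
  rw [nComp_eq_nCov_add_card, nComp_eq_nCov_add_card, nCov_congr h, support_congr h, hverts,
    Finset.filter_erase, add_assoc, Finset.card_erase_add_one (Finset.mem_filter.mpr ⟨hv, hvA⟩)]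

end Congr

end SpanningSubgraph

section PendantEdge

variable {G : Multigraph α β} {A : Finset β} {e : β} {v₁ v₂ : α}
  (hends : G.ends e = s(v₁, v₂)) (hne : v₁ ≠ v₂) (hv₁ : v₁ ∉ G.support A)

include hends

lemma support_insert : G.support (insert e A) = insert v₁ (insert v₂ (G.support A)) := by
  ext v
  simp [mem_support, hends, or_assoc]

include hv₁

lemma reachable_of_reachable_insert {a b : α} (h : (G.sg (insert e A)).Reachable a b) :
    (G.sg A).Reachable (if a = v₁ then v₂ else a) (if b = v₁ then v₂ else b) := by
  rw [SimpleGraph.reachable_iff_reflTransGen] at h ⊢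
  refine h.lift' (fun w => if w = v₁ then v₂ else w) fun a b hab => ?_
  show Relation.ReflTransGen _ _ _
  rw [← SimpleGraph.reachable_iff_reflTransGen]
  obtain ⟨⟨f, hf, hs⟩, hab⟩ := (SimpleGraph.fromEdgeSet_adj _).mp hab
  rcases Finset.mem_insert.mp hf with rfl | hfA
  · rw [hends, Sym2.eq_iff] at hs
    rcases hs with ⟨rfl, rfl⟩ | ⟨rfl, rfl⟩ <;> simp
  · have hA : (G.sg A).Adj a b := (SimpleGraph.fromEdgeSet_adj _).mpr ⟨⟨f, hfA, hs⟩, hab⟩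
    have ha : a ≠ v₁ := fun h => hv₁ (h ▸ mem_support_of_adj hA)
    have hb : b ≠ v₁ := fun h => hv₁ (h ▸ mem_support_of_adj hA.symm)
    simpa only [if_neg ha, if_neg hb] using hA.reachable

include hne

lemma nCov_insert_eq_card :
    G.nCov (insert e A) =
      ((insert v₂ (G.support A)).image (G.sg A).connectedComponentMk).card := by
  set π := SimpleGraph.ConnectedComponent.map
    (SimpleGraph.Hom.ofLE (sg_mono (G := G) (Finset.subset_insert e A)))
  have hjoin : (G.sg (insert e A)).connectedComponentMk v₁ =
      (G.sg (insert e A)).connectedComponentMk v₂ :=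
    SimpleGraph.ConnectedComponent.connectedComponentMk_eq_of_adj
      ((SimpleGraph.fromEdgeSet_adj _).mpr ⟨⟨e, Finset.mem_insert_self e A, hends⟩, hne⟩)
  -- `π` only glues the component `{v₁}` to that of `v₂`.
  have hinj : Set.InjOn π ((insert v₂ (G.support A)).image (G.sg A).connectedComponentMk) := by
    simp only [Finset.coe_image, Set.InjOn, Set.mem_image, Finset.mem_coe]
    rintro _ ⟨a, ha, rfl⟩ _ ⟨b, hb, rfl⟩ hab
    have hne₁ : ∀ w ∈ insert v₂ (G.support A), w ≠ v₁ := by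
      rintro w hw rfl
      exact (Finset.mem_insert.mp hw).elim hne hv₁
    have := reachable_of_reachable_insert hends hv₁
      (SimpleGraph.ConnectedComponent.exact hab : (G.sg (insert e A)).Reachable a b)
    rw [if_neg (hne₁ a ha), if_neg (hne₁ b hb)] at this
    exact SimpleGraph.ConnectedComponent.sound this
  rw [nCov_eq_card_image, support_insert hends, Finset.image_insert, hjoin,
    Finset.insert_eq_of_mem (Finset.mem_image_of_mem _ (Finset.mem_insert_self _ _)),
    ← Finset.card_image_of_injOn hinj, Finset.image_image]
  rfl

lemma nCov_insert_of_mem (hv₂ : v₂ ∈ G.support A) : G.nCov (insert e A) = G.nCov A := by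
  rw [nCov_insert_eq_card hends hne hv₁, Finset.insert_eq_of_mem hv₂, nCov_eq_card_image]

lemma nCov_insert_of_notMem (hv₂ : v₂ ∉ G.support A) :
    G.nCov (insert e A) = G.nCov A + 1 := by
  rw [nCov_insert_eq_card hends hne hv₁, Finset.image_insert, Finset.card_insert_of_notMem,
    nCov_eq_card_image]
  intro h
  obtain ⟨w, hw, hmk⟩ := Finset.mem_image.mp h
  exact hv₂ (eq_of_connectedComponentMk_eq hv₂ hmk ▸ hw)

lemma nComp_insert_add_one (hv₁G : v₁ ∈ G.verts) (hv₂G : v₂ ∈ G.verts) :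
    G.nComp (insert e A) + 1 = G.nComp A := by
  rw [nComp_eq_nCov_add_card, nComp_eq_nCov_add_card]
  set I := G.verts.filter (· ∉ G.support A)
  have hI : G.verts.filter (· ∉ G.support (insert e A)) = (I.erase v₁).erase v₂ := by
    ext v
    simp only [support_insert hends, I, Finset.mem_filter, Finset.mem_erase, Finset.mem_insert]
    tauto
  have h₁ := Finset.card_erase_add_one (s := I) (Finset.mem_filter.mpr ⟨hv₁G, hv₁⟩)
  rw [hI]
  by_cases hv₂ : v₂ ∈ G.support A
  · rw [nCov_insert_of_mem hends hne hv₁ hv₂,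
      Finset.erase_eq_of_notMem (by simp [I, hv₂])]
    omega
  · have h₂ := Finset.card_erase_add_one (s := I.erase v₁)
      (Finset.mem_erase.mpr ⟨hne.symm, Finset.mem_filter.mpr ⟨hv₂G, hv₂⟩⟩)
    rw [nCov_insert_of_notMem hends hne hv₁ hv₂]
    omega

end PendantEdge

lemma contract_ends_of_notMem {G : Multigraph α β} {e f : β} {u w : α} (h : w ∉ G.ends f) :
    (G.contract e u w).ends f = G.ends f :=
  (Sym2.map_congr fun x hx => if_neg fun hxw : x = w => h (hxw ▸ hx)).trans
    (congrFun Sym2.map_id' (G.ends f))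

lemma contract_verts_of_mem {G : Multigraph α β} {e : β} {u w : α} (hu : u ∈ G.verts)
    (hne : u ≠ w) : (G.contract e u w).verts = G.verts.erase w :=
  Finset.insert_eq_self.mpr (Finset.mem_erase.mpr ⟨hne, hu⟩)

lemma weight_add_weight_insert {G : Multigraph α β} {A : Finset β} {e : β} {v₁ v₂ : α}
    (he : e ∈ G.edges) (hends : G.ends e = s(v₁, v₂)) (hne : v₁ ≠ v₂)
    (hv₁ : v₁ ∉ G.support A) (heA : e ∉ A) :
    G.weight A + G.weight (insert e A) = (X 0 + X 1) * (G.contract e v₂ v₁).weight A +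
      if v₂ ∉ G.support A then
        (X 0 * X 1 * X 2 - X 0 * X 1) * (G.extract v₁ v₂).weight A else 0 := by
  have hv₁G : v₁ ∈ G.verts := G.ends_mem e he v₁ (hends ▸ Sym2.mem_mk_left v₁ v₂)
  have hv₂G : v₂ ∈ G.verts := G.ends_mem e he v₂ (hends ▸ Sym2.mem_mk_right v₁ v₂)
  have hendsA : ∀ f ∈ A, (G.contract e v₂ v₁).ends f = G.ends f := fun f hf =>
    contract_ends_of_notMem fun h => hv₁ (mem_support.mpr ⟨f, hf, h⟩)
  have hverts := contract_verts_of_mem (e := e) hv₂G hne.symm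
  have hk := nComp_insert_add_one hends hne hv₁ hv₁G hv₂G
  have hk' := nComp_add_one_of_verts_eq_erase hendsA hverts hv₁G hv₁
  have hc' := nCov_congr hendsA
  simp only [weight, Finset.card_insert_of_notMem heA]
  split_ifs with hv₂
  · rw [show G.nComp A = (G.contract e v₂ v₁).nComp A + 1 by omega,
      show G.nComp (insert e A) = (G.contract e v₂ v₁).nComp A by omega,
      nCov_insert_of_mem hends hne hv₁ hv₂, hc']
    ring
  · have hk'' : (G.extract v₁ v₂).nComp A + 1 = (G.contract e v₂ v₁).nComp A :=
      nComp_add_one_of_verts_eq_erase (fun f hf => (hendsA f hf).symm)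
        (by rw [hverts]; rfl) (by rw [hverts]; exact Finset.mem_erase.mpr ⟨hne.symm, hv₂G⟩)
        (by rwa [support_congr hendsA])
    have hc'' : (G.extract v₁ v₂).nCov A = G.nCov A := rfl
    rw [show G.nComp A = (G.extract v₁ v₂).nComp A + 2 by omega,
      show G.nComp (insert e A) = (G.extract v₁ v₂).nComp A + 1 by omega,
      show (G.contract e v₂ v₁).nComp A = (G.extract v₁ v₂).nComp A + 1 by omega,
      nCov_insert_of_notMem hends hne hv₁ hv₂, hc', hc'']
    ring

lemma filter_powerset_erase_eq_powerset_extract {G : Multigraph α β} {e : β} {v₁ v₂ : α}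
    (hends : G.ends e = s(v₁, v₂)) (hpendant : ∀ f ∈ G.edges, f ≠ e → v₁ ∉ G.ends f) :
    (G.edges.erase e).powerset.filter (fun A => v₂ ∉ G.support A) =
      (G.extract v₁ v₂).edges.powerset := by
  ext A
  simp only [extract, Finset.mem_filter, Finset.mem_powerset, Finset.subset_iff,
    Finset.mem_erase, mem_support]
  constructor
  · rintro ⟨hA, hv₂⟩ f hf
    exact ⟨(hA hf).2, hpendant f (hA hf).2 (hA hf).1, fun h => hv₂ ⟨f, hf, h⟩⟩
  · intro hA
    refine ⟨fun f hf => ⟨?_, (hA hf).1⟩, fun ⟨f, hf, h⟩ => (hA hf).2.2 h⟩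
    rintro rfl
    exact (hA hf).2.1 (hends ▸ Sym2.mem_mk_left v₁ v₂)

end Multigraph

/-- Let `G` be a finite (multi)graph and `e` a pendant edge, i.e. an
edge with endpoints `v₁ ≠ v₂` such that the incident vertex `v₁` has degree `1` (no
other edge of `G` is incident to `v₁`).  Then
`C(G,x,y,z) = (x + y)·C(G/ₑ,x,y,z) + (xyz − xy)·C(G†ₑ,x,y,z)`. -/
theorem ccp_pendant_edge {α β : Type} (G : Multigraph α β)
    (e : β) (he : e ∈ G.edges) (v₁ v₂ : α) (hends : G.ends e = s(v₁, v₂))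
    (hne : v₁ ≠ v₂) (hpendant : ∀ f ∈ G.edges, f ≠ e → v₁ ∉ G.ends f) :
    G.ccp = (X 0 + X 1) * (G.contract e v₂ v₁).ccp +
      (X 0 * X 1 * X 2 - X 0 * X 1) * (G.extract v₁ v₂).ccp := by
  have hsplit : ∀ A ∈ (G.edges.erase e).powerset, G.weight A + G.weight (insert e A) = _ :=
    fun A hA => Multigraph.weight_add_weight_insert he hends hne
      (fun h => by
        obtain ⟨f, hf, hv₁f⟩ := Multigraph.mem_support.mp h
        have hfE := Finset.mem_erase.mp (Finset.mem_powerset.mp hA hf)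
        exact hpendant f hfE.2 hfE.1 hv₁f)
      (fun h => (Finset.mem_erase.mp (Finset.mem_powerset.mp hA h)).1 rfl)
  change ∑ A ∈ G.edges.powerset, G.weight A =
    (X 0 + X 1) * ∑ A ∈ (G.edges.erase e).powerset, (G.contract e v₂ v₁).weight A +
      _ * ∑ A ∈ (G.extract v₁ v₂).edges.powerset, (G.extract v₁ v₂).weight A
  conv_lhs => rw [← Finset.insert_erase he]
  rw [Finset.sum_powerset_insert (Finset.notMem_erase e _), ← Finset.sum_add_distrib,
    Finset.sum_congr rfl hsplit, Finset.sum_add_distrib, ← Finset.mul_sum, ← Finset.sum_filter,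
    Multigraph.filter_powerset_erase_eq_powerset_extract hends hpendant, ← Finset.mul_sum]
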